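/- Let X be a finite nonempty alphabet and p a probability distribution on X with p(x) > 0 for all x. Define δ(x,x') = p(x) if x = x', else 0, and π(x,x') = p(x)p(x') on X × X, and let m = (δ + π)/2. Then the Jensen–Shannon divergence D*(δ‖π) = (1/2)·Σ_{x,x'} δ(x,x') log₂(δ(x,x')/m(x,x')) + (1/2)·Σ_{x,x'} π(x,x') log₂(π(x,x')/m(x,x')) equals Σ_x p(x) · (1/2) · log₂( 4 p(x)^{p(x)} / (p(x)+1)^{p(x)+1} ). -/

import Mathlib

/-!
Off the diagonal the mixture is exactly half of the product distribution, so each such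
cell contributes `p x p x' · log₂ 2 = p x p x'`; only the diagonal cells carry information.
Summing the rows with `∑ p = 1` leaves, for each `x`, a one-variable identity in
`t = p x` between `log₂ t` and `log₂ (t + 1)`.
-/

open Finset

namespace JensenShannon

open Real

variable {X : Type*} [DecidableEq X] (p : X → ℝ)

def selfJoint (x x' : X) : ℝ := if x = x' then p x else 0

def selfProduct (x x' : X) : ℝ := p x * p x'

noncomputable def mixture (x x' : X) : ℝ := (selfJoint p x x' + selfProduct p x x') / 2

variable {p}

lemma selfJoint_mul_logb_div_mixture {x : X} (hx : 0 < p x) (x' : X) :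
    selfJoint p x x' * logb 2 (selfJoint p x x' / mixture p x x') =
      if x = x' then p x * (1 - logb 2 (p x + 1)) else 0 := by
  unfold mixture selfJoint selfProduct
  split_ifs with h
  · subst h
    have harg : p x / ((p x + p x * p x) / 2) = 2 / (p x + 1) := by
      field_simp
      ring
    rw [harg, logb_div two_ne_zero (by positivity), logb_self_eq_one one_lt_two]
  · rw [zero_mul]

lemma selfProduct_mul_logb_div_mixture {x : X} (hx : 0 < p x) (x' : X) :
    selfProduct p x x' * logb 2 (selfProduct p x x' / mixture p x x') =
      p x * p x' + if x = x' then p x ^ 2 * (logb 2 (p x) - logb 2 (p x + 1)) else 0 := by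
  unfold mixture selfJoint selfProduct
  split_ifs with h
  · subst h
    have harg : p x * p x / ((p x + p x * p x) / 2) = 2 * p x / (p x + 1) := by
      field_simp
      ring
    rw [harg, logb_div (by positivity) (by positivity), logb_mul two_ne_zero hx.ne',
      logb_self_eq_one one_lt_two]
    ring
  · rcases eq_or_ne (p x * p x') 0 with hzero | hne
    · simp [hzero]
    · rw [zero_add, div_div_cancel₀ hne, logb_self_eq_one one_lt_two]
      ring

variable [Fintype X]

lemma sum_selfJoint_mul_logb_div_mixture {x : X} (hx : 0 < p x) :
    ∑ x', selfJoint p x x' * logb 2 (selfJoint p x x' / mixture p x x') =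
      p x * (1 - logb 2 (p x + 1)) := by
  simp only [selfJoint_mul_logb_div_mixture hx, sum_ite_eq, mem_univ, if_true]

lemma sum_selfProduct_mul_logb_div_mixture (hsum : ∑ x, p x = 1) {x : X} (hx : 0 < p x) :
    ∑ x', selfProduct p x x' * logb 2 (selfProduct p x x' / mixture p x x') =
      p x + p x ^ 2 * (logb 2 (p x) - logb 2 (p x + 1)) := by
  simp only [selfProduct_mul_logb_div_mixture hx, sum_add_distrib, ← mul_sum, hsum, mul_one,
    sum_ite_eq, mem_univ, if_true]

end JensenShannon

open JensenShannon

lemma Real.logb_four_mul_rpow_self_div_rpow {t : ℝ} (ht : 0 < t) :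
    logb 2 (4 * t ^ t / (t + 1) ^ (t + 1)) = 2 + t * logb 2 t - (t + 1) * logb 2 (t + 1) := by
  have h4 : logb 2 4 = 2 := by
    rw [show (4 : ℝ) = 2 ^ 2 by norm_num, logb_pow, logb_self_eq_one one_lt_two]
    norm_num
  rw [logb_div (by positivity) (by positivity), logb_mul four_ne_zero (by positivity), h4,
    logb_rpow_eq_mul_logb_of_pos ht, logb_rpow_eq_mul_logb_of_pos (by positivity)]

theorem jsd_selfJoint_selfProduct_eq_linEntropy
    {X : Type*} [Fintype X] [DecidableEq X] (p : X → ℝ)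
    (hp : ∀ x, 0 < p x) (hsum : ∑ x, p x = 1) :
    (let δ : X → X → ℝ := fun x x' => if x = x' then p x else 0
     let π : X → X → ℝ := fun x x' => p x * p x'
     let m : X → X → ℝ := fun x x' => (δ x x' + π x x') / 2
     (1 / 2) * ∑ x, ∑ x', δ x x' * Real.logb 2 (δ x x' / m x x') +
       (1 / 2) * ∑ x, ∑ x', π x x' * Real.logb 2 (π x x' / m x x')) =
    ∑ x, p x * ((1 / 2) *
      Real.logb 2 (4 * p x ^ p x / (p x + 1) ^ (p x + 1))) := by
  show (1 / 2) * ∑ x, ∑ x', selfJoint p x x' * Real.logb 2 (selfJoint p x x' / mixture p x x') +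
      (1 / 2) * ∑ x, ∑ x', selfProduct p x x' *
        Real.logb 2 (selfProduct p x x' / mixture p x x') = _
  rw [sum_congr rfl fun x _ => sum_selfJoint_mul_logb_div_mixture (hp x),
    sum_congr rfl fun x _ => sum_selfProduct_mul_logb_div_mixture hsum (hp x),
    mul_sum, mul_sum, ← sum_add_distrib]
  refine sum_congr rfl fun x _ => ?_
  rw [Real.logb_four_mul_rpow_self_div_rpow (hp x)]
  ring
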